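/- arXiv:1204.3246 — 2 statements merged into one kernel-verified Lean document; each statement's English description precedes it below -/
import Mathlib

section
/- Let R be an alternative Banach algebra with unit in which left inverses can be cancelled (A⁻¹(AB) = B whenever A has a left inverse A⁻¹). If A ∈ R has a left inverse Q and B ∈ R satisfies ‖B‖·‖Q‖ < 1, then A + B has a left inverse, given by C = Q(I − BQ + (BQ)² − (BQ)³ + ...). -/
/-!
Put `x = BQ` and `Pₙ = Q xⁿ`. In an alternative ring the associators `[x, xⁿ, z]` and
`[B, Q, xⁿ]` vanish (instances of Artin's theorem, which here follow from the Teichmüller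
identity and the middle Moufang identity), and together with `Q(Ab) = b` this gives
`Pₙ₊₁ A = Pₙ B`. Hence, multiplied on the right by `A + B`, the alternating series
`C = Σ (-1)ⁿ Pₙ` telescopes to `P₀ A = QA = 1`; it converges because `‖x‖ ≤ ‖B‖‖Q‖ < 1`.
-/

/-- Powers in a (possibly non-associative) algebra: `apow A 0 = 1`, `apow A (n+1) = A * apow A n`. -/
def apow {R : Type*} [One R] [Mul R] (A : R) : ℕ → R
  | 0 => 1
  | n + 1 => A * apow A n

class IsAlternative (R : Type*) [Mul R] : Prop where
  left_alternative (a b : R) : a * a * b = a * (a * b)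
  right_alternative (a b : R) : a * (b * b) = a * b * b

namespace IsAlternative

variable {R : Type*} [NonUnitalNonAssocRing R] [IsAlternative R]

theorem associator_self_left (a b : R) : associator a a b = 0 :=
  sub_eq_zero.2 (left_alternative a b)

theorem associator_self_right (a b : R) : associator a b b = 0 :=
  sub_eq_zero.2 (right_alternative a b).symm

theorem associator_swap_left (a b c : R) : associator b a c = -associator a b c := by
  have h := associator_self_left (a + b) c
  simp only [associator, add_mul, mul_add, left_alternative] at h ⊢
  linear_combination (norm := abel) h

theorem associator_swap_right (a b c : R) : associator a c b = -associator a b c := by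
  have h := associator_self_right a (b + c)
  simp only [associator, add_mul, mul_add, right_alternative] at h ⊢
  linear_combination (norm := abel) h

theorem associator_rotate (a b c : R) : associator b c a = associator a b c := by
  rw [associator_swap_right b a c, associator_swap_left, neg_neg]

theorem associator_self_mid (a b : R) : associator a b a = 0 := by
  rw [associator_swap_right, associator_self_left, neg_zero]

theorem associator_mul_mid (x y z : R) : associator x (x * y) z = associator x y z * x := by
  have hmid : associator x (x * y) z = associator (x * x) y z - x * associator x y z := by
    have h := associator_cocycle x x y z
    rw [associator_self_left, associator_self_left, zero_mul, add_zero, sub_zero] at h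
    linear_combination (norm := abel) h
  have hright : associator y (z * x) x = x * associator x y z := by
    have h := associator_cocycle z x x y
    rw [associator_self_left, associator_self_right, mul_zero, zero_mul, add_zero,
      associator_rotate y (z * x) x, ← associator_rotate z (x * x) y,
      ← associator_rotate z x (x * y), hmid] at h
    linear_combination (norm := abel) -h
  have hsq : associator (x * x) y z = x * associator x y z + associator x y z * x := by
    have h := associator_cocycle y z x x
    rw [associator_self_right, associator_self_right, mul_zero, hright,
      associator_rotate (x * x) y z, associator_rotate x y z] at h
    linear_combination (norm := abel) -h
  rw [hmid, hsq, add_sub_cancel_left]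

theorem associator_mul_right (a b : R) : associator a b (a * b) = 0 := by
  rw [associator_swap_right, associator_mul_mid, associator_self_right, zero_mul, neg_zero]

theorem middle_moufang (x y z : R) : x * y * (z * x) = x * (y * z * x) := by
  have h : associator (x * y) z x = associator x y z * x := by
    rw [associator_rotate x, associator_mul_mid]
  have hflex := associator_self_mid x (y * z)
  simp only [associator, sub_mul] at h hflex
  rw [sub_right_injective h, sub_eq_zero.1 hflex]

end IsAlternative

theorem apow_one {R : Type*} [MulOneClass R] (x : R) : apow x 1 = x := mul_one x

section Powers

open IsAlternative

variable {R : Type*} [NonAssocRing R] [IsAlternative R]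

theorem apow_succ' (x : R) (n : ℕ) : apow x (n + 1) = apow x n * x := by
  induction n with
  | zero => rw [apow_one]; exact (one_mul x).symm
  | succ n ih =>
    change x * apow x (n + 1) = x * apow x n * x
    rw [ih, ← sub_eq_zero.1 (associator_self_mid x (apow x n))]

theorem associator_apow (x z : R) (n : ℕ) : associator x (apow x n) z = 0 := by
  induction n with
  | zero => simp [associator, apow]
  | succ n ih => rw [apow, associator_mul_mid, ih, zero_mul]

theorem associator_apow_self (b x : R) (n : ℕ) : associator b (apow x n) x = 0 := by
  rw [associator_rotate x, associator_swap_right, associator_apow, neg_zero]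

theorem apow_succ_mul (x z : R) (n : ℕ) : apow x (n + 1) * z = x * (apow x n * z) :=
  sub_eq_zero.1 (associator_apow x z n)

theorem apow_succ_mul_of_mul_eq {x a b : R} (h : x * a = b) (n : ℕ) :
    apow x (n + 1) * a = apow x n * b := by
  induction n with
  | zero => rw [apow_one, h]; exact (one_mul b).symm
  | succ n ih => rw [apow_succ_mul, ih, ← apow_succ_mul]

theorem associator_mul_apow (a b : R) (n : ℕ) : associator a b (apow (a * b) n) = 0 := by
  set x := a * b
  have hpow (m : ℕ) : associator a b (apow x m) = 0 ↔ a * (b * apow x m) = apow x (m + 1) := by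
    rw [associator, sub_eq_zero, eq_comm]; rfl
  induction n using Nat.twoStepInduction with
  | zero => simp [associator, apow]
  | one => rw [apow_one]; exact associator_mul_right a b
  | more n ih ih' =>
    have hbp : b * apow x (n + 1) = b * apow x n * x := by
      rw [apow_succ', sub_eq_zero.1 (associator_apow_self b x n)]
    have hmid : associator a (b * apow x (n + 1)) x = 0 := by
      rw [associator_rotate x, associator, (hpow _).1 ih', hbp, middle_moufang, (hpow n).1 ih,
        ← apow_succ', sub_self]
    have h := associator_cocycle a b (apow x (n + 1)) x
    rw [associator_apow_self, mul_zero, associator_self_mid, hmid, ih', zero_mul, ← apow_succ']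
      at h
    linear_combination (norm := abel) -h

theorem mul_apow_succ_mul_eq {A B Q : R} (hQ : Q * A = 1) (hcancel : ∀ b, Q * (A * b) = b)
    (n : ℕ) : Q * apow (B * Q) (n + 1) * A = Q * apow (B * Q) n * B := by
  have hassoc_right (u : R) : Q * u * A = Q * (u * A) := by
    rw [← sub_eq_zero, ← associator, associator_swap_right, associator, hQ, hcancel, one_mul,
      sub_self, neg_zero]
  have hBQA : B * Q * A = B := by
    have h : associator Q A B = 0 := by rw [associator, hQ, hcancel, one_mul, sub_self]
    rw [sub_eq_zero.1 ((associator_rotate B Q A).symm.trans h), hQ, mul_one]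
  calc Q * apow (B * Q) (n + 1) * A = Q * (apow (B * Q) n * B) := by
        rw [hassoc_right, apow_succ_mul_of_mul_eq hBQA]
    _ = Q * apow (B * Q) n * B :=
        (sub_eq_zero.1 ((associator_rotate B Q _).trans (associator_mul_apow B Q n))).symm

end Powers

section Normed

variable {R : Type*}

theorem norm_apow_le [SeminormedAddCommGroup R] [One R] [Mul R]
    (hsubmul : ∀ a b : R, ‖a * b‖ ≤ ‖a‖ * ‖b‖) (x : R) (n : ℕ) :
    ‖apow x n‖ ≤ ‖(1 : R)‖ * ‖x‖ ^ n := by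
  induction n with
  | zero => simp [apow]
  | succ n ih =>
    calc ‖x * apow x n‖ ≤ ‖x‖ * ‖apow x n‖ := hsubmul _ _
      _ ≤ ‖x‖ * (‖(1 : R)‖ * ‖x‖ ^ n) := by gcongr
      _ = ‖(1 : R)‖ * ‖x‖ ^ (n + 1) := by ring

theorem summable_alternating_mul_apow [NormedAddCommGroup R] [NormedSpace ℝ R] [CompleteSpace R]
    [One R] [Mul R] (hsubmul : ∀ a b : R, ‖a * b‖ ≤ ‖a‖ * ‖b‖) (Q x : R) (hx : ‖x‖ < 1) :
    Summable fun n : ℕ => (-1 : ℝ) ^ n • (Q * apow x n) := by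
  refine .of_norm_bounded
    ((summable_geometric_of_lt_one (norm_nonneg x) hx).mul_left (‖Q‖ * ‖(1 : R)‖)) fun n => ?_
  rw [norm_smul, norm_pow, norm_neg, norm_one, one_pow, one_mul, mul_assoc]
  exact (hsubmul _ _).trans (by gcongr; exact norm_apow_le hsubmul x n)

theorem mul_add_eq_of_hasSum_alternating [NormedAddCommGroup R] [Module ℝ R] [Mul R]
    (hsubmul : ∀ a b : R, ‖a * b‖ ≤ ‖a‖ * ‖b‖)
    (hldistrib : ∀ a b c : R, a * (b + c) = a * b + a * c)
    (hrdistrib : ∀ a b c : R, (a + b) * c = a * c + b * c)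
    (hsmul_left : ∀ (r : ℝ) (a b : R), (r • a) * b = r • (a * b))
    {P : ℕ → R} {A B C : R} (hP : ∀ n, P (n + 1) * A = P n * B)
    (hC : HasSum (fun n => (-1 : ℝ) ^ n • P n) C) :
    C * (A + B) = P 0 * A := by
  have hmul (c : R) : HasSum (fun n => (-1 : ℝ) ^ n • (P n * c)) (C * c) := by
    let f : R →+ R := AddMonoidHom.mk' (· * c) (hrdistrib · · c)
    have hf : Continuous f := AddMonoidHomClass.continuous_of_bound f ‖c‖
      fun v => (hsubmul v c).trans_eq (mul_comm _ _)
    simpa [f, Function.comp_def, hsmul_left] using hC.map f hf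
  have hshift := (hasSum_nat_add_iff' 1).2 (hmul A)
  simp only [pow_succ, mul_neg_one, neg_smul, hP, Finset.sum_range_one, pow_zero, one_smul]
    at hshift
  rw [hldistrib, (hmul B).unique (by simpa only [neg_neg] using hshift.neg)]
  abel

end Normed

theorem left_inverse_perturbation_general
    {R : Type*} [NormedAddCommGroup R] [NormedSpace ℝ R] [CompleteSpace R]
    [One R] [Mul R]
    (hone : ∀ a : R, 1 * a = a ∧ a * 1 = a)
    (hsubmul : ∀ a b : R, ‖a * b‖ ≤ ‖a‖ * ‖b‖)
    (hldistrib : ∀ a b c : R, a * (b + c) = a * b + a * c)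
    (hrdistrib : ∀ a b c : R, (a + b) * c = a * c + b * c)
    (hsmul_left : ∀ (r : ℝ) (a b : R), (r • a) * b = r • (a * b))
    (halt : ∀ a b : R, (a * a) * b = a * (a * b) ∧ b * (a * a) = (b * a) * a)
    (hcancel : ∀ a q b : R, q * a = 1 → q * (a * b) = b)
    (A Q B : R) (hQ : Q * A = 1) (hB : ‖B‖ * ‖Q‖ < 1) :
    ∃ C : R,
      HasSum (fun n : ℕ => ((-1 : ℝ) ^ n) • (Q * apow (B * Q) n)) C ∧
      C * (A + B) = 1 := by
  let _ : NonAssocRing R :=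
    { left_distrib := hldistrib
      right_distrib := hrdistrib
      zero_mul := fun a => by simpa using hrdistrib 0 0 a
      mul_zero := fun a => by simpa using hldistrib a 0 0
      one_mul := fun a => (hone a).1
      mul_one := fun a => (hone a).2 }
  have : IsAlternative R := ⟨fun a b => (halt a b).1, fun a b => (halt b a).2⟩
  obtain ⟨C, hC⟩ := summable_alternating_mul_apow hsubmul Q (B * Q) ((hsubmul B Q).trans_lt hB)
  refine ⟨C, hC, ?_⟩
  rw [mul_add_eq_of_hasSum_alternating hsubmul hldistrib hrdistrib hsmul_left
    (mul_apow_succ_mul_eq hQ (hcancel A Q · hQ)) hC, apow, (hone Q).2, hQ]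

/-- In an alternative Banach algebra with unit in which left inverses cancel,
if `Q` is a left inverse of `A` and `‖B‖ * ‖Q‖ < 1`, then `A + B` has a left inverse,
given by the absolutely convergent series `C = Q(1 - BQ + (BQ)² - (BQ)³ + ⋯)`. -/
theorem left_inverse_perturbation
    {R : Type*} [NormedAddCommGroup R] [NormedSpace ℝ R] [CompleteSpace R]
    [One R] [Mul R]
    (hone : ∀ a : R, 1 * a = a ∧ a * 1 = a)
    (hnorm_one : ‖(1 : R)‖ = 1)
    (hsubmul : ∀ a b : R, ‖a * b‖ ≤ ‖a‖ * ‖b‖)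
    (hldistrib : ∀ a b c : R, a * (b + c) = a * b + a * c)
    (hrdistrib : ∀ a b c : R, (a + b) * c = a * c + b * c)
    (hsmul_left : ∀ (r : ℝ) (a b : R), (r • a) * b = r • (a * b))
    (hsmul_right : ∀ (r : ℝ) (a b : R), a * (r • b) = r • (a * b))
    (halt : ∀ a b : R, (a * a) * b = a * (a * b) ∧ b * (a * a) = (b * a) * a)
    (hcancel : ∀ a q b : R, q * a = 1 → q * (a * b) = b)
    (A Q B : R) (hQ : Q * A = 1) (hB : ‖B‖ * ‖Q‖ < 1) :
    ∃ C : R,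
      HasSum (fun n : ℕ => ((-1 : ℝ) ^ n) • (Q * apow (B * Q) n)) C ∧
      C * (A + B) = 1 :=
  left_inverse_perturbation_general hone hsubmul hldistrib hrdistrib hsmul_left halt hcancel A Q B
    hQ hB
end

section
/- In an alternative Banach algebra R with unit satisfying the hypotheses above, the set of all left invertible elements is an open subset of R. -/
/-- In an alternative Banach algebra with unit (`‖1‖ = 1`, submultiplicative
norm), the set of all left invertible elements is open. -/
theorem left_invertibles_isOpen
    {R : Type*} [NormedAddCommGroup R] [NormedSpace ℝ R] [CompleteSpace R]
    [One R] [Mul R]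
    (hone : ∀ a : R, 1 * a = a ∧ a * 1 = a)
    (hnorm_one : ‖(1 : R)‖ = 1)
    (hsubmul : ∀ a b : R, ‖a * b‖ ≤ ‖a‖ * ‖b‖)
    (hldistrib : ∀ a b c : R, a * (b + c) = a * b + a * c)
    (hrdistrib : ∀ a b c : R, (a + b) * c = a * c + b * c)
    (hsmul_left : ∀ (r : ℝ) (a b : R), (r • a) * b = r • (a * b))
    (hsmul_right : ∀ (r : ℝ) (a b : R), a * (r • b) = r • (a * b))
    (halt : ∀ a b : R, (a * a) * b = a * (a * b) ∧ b * (a * a) = (b * a) * a)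
    (hcancel : ∀ a q b : R, q * a = 1 → q * (a * b) = b) :
    IsOpen {A : R | ∃ Q : R, Q * A = 1} := by
  -- linearized left-alternative law
  have lin1 : ∀ a b c : R, (a*b)*c + (b*a)*c = a*(b*c) + b*(a*c) := by
    intro a b c
    have h := (halt (a+b) c).1
    have e1 : ((a+b)*(a+b))*c = ((a*a)*c + (a*b)*c) + ((b*a)*c + (b*b)*c) := by
      rw [hrdistrib a b (a+b), hldistrib a a b, hldistrib b a b,
        hrdistrib (a*a + a*b) (b*a + b*b) c, hrdistrib (a*a) (a*b) c,
        hrdistrib (b*a) (b*b) c]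
    have e2 : (a+b)*((a+b)*c) = (a*(a*c) + a*(b*c)) + (b*(a*c) + b*(b*c)) := by
      rw [hrdistrib a b c, hrdistrib a b (a*c + b*c), hldistrib a (a*c) (b*c),
        hldistrib b (a*c) (b*c)]
    rw [e1, e2, (halt a c).1, (halt b c).1] at h
    rw [← sub_eq_zero]
    calc (a*b)*c + (b*a)*c - (a*(b*c) + b*(a*c))
        = ((a*(a*c) + (a*b)*c) + ((b*a)*c + b*(b*c)))
          - ((a*(a*c) + a*(b*c)) + (b*(a*c) + b*(b*c))) := by abel
      _ = 0 := sub_eq_zero_of_eq h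
  -- linearized right-alternative law
  have lin2 : ∀ a b c : R, a*(b*c) + a*(c*b) = (a*b)*c + (a*c)*b := by
    intro a b c
    have h := (halt (b+c) a).2
    have e1 : a*((b+c)*(b+c)) = (a*(b*b) + a*(b*c)) + (a*(c*b) + a*(c*c)) := by
      rw [hrdistrib b c (b+c), hldistrib b b c, hldistrib c b c,
        hldistrib a (b*b + b*c) (c*b + c*c), hldistrib a (b*b) (b*c),
        hldistrib a (c*b) (c*c)]
    have e2 : (a*(b+c))*(b+c) = ((a*b)*b + (a*b)*c) + ((a*c)*b + (a*c)*c) := by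
      rw [hldistrib a b c, hrdistrib (a*b) (a*c) (b+c), hldistrib (a*b) b c,
        hldistrib (a*c) b c]
    rw [e1, e2, (halt b a).2, (halt c a).2] at h
    rw [← sub_eq_zero]
    calc a*(b*c) + a*(c*b) - ((a*b)*c + (a*c)*b)
        = (((a*b)*b + a*(b*c)) + (a*(c*b) + (a*c)*c))
          - (((a*b)*b + (a*b)*c) + ((a*c)*b + (a*c)*c)) := by abel
      _ = 0 := sub_eq_zero_of_eq h
  -- openness
  rw [Metric.isOpen_iff]
  rintro A ⟨Q, hQ⟩
  have hzmul : ∀ x : R, (0:R) * x = 0 := by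
    intro x
    have h := hrdistrib 0 0 x
    rw [add_zero] at h
    have h2 : (0:R)*x + 0 = 0*x + 0*x := by rw [add_zero, ← h]
    exact (add_left_cancel h2).symm
  have hQne : Q ≠ 0 := by
    rintro rfl
    have h10 : (1:R) = 0 := hQ.symm.trans (hzmul A)
    rw [h10, norm_zero] at hnorm_one
    norm_num at hnorm_one
  have hQpos : 0 < ‖Q‖ := norm_pos_iff.mpr hQne
  refine ⟨1/‖Q‖, by positivity, ?_⟩
  intro A' hA'
  set B := A' - A with hBdef
  have hAB : A' = A + B := by rw [hBdef]; abel
  have hr : ‖B‖ * ‖Q‖ < 1 := by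
    have hb : ‖B‖ < 1/‖Q‖ := by
      rw [Metric.mem_ball, dist_eq_norm] at hA'
      exact hA'
    exact (lt_div_iff₀ hQpos).mp hb
  have hrnn : 0 ≤ ‖B‖ * ‖Q‖ := by positivity
  -- key cancellation: (x*Q)*A = x
  have key : ∀ x : R, (x*Q)*A = x := by
    intro x
    have h1 := lin1 x Q A
    have h2 := lin2 Q x A
    rw [hQ, (hone x).2] at h1
    rw [hcancel A Q x hQ, hQ, (hone x).1] at h2
    have h3 : Q*(x*A) = (Q*x)*A := add_right_cancel h2
    rw [h3] at h1
    exact add_right_cancel h1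
  -- the approximating sequence
  let e : ℕ → R := fun n => Nat.rec (motive := fun _ => R) Q (fun _ x => x * B * Q) n
  have e0 : e 0 = Q := rfl
  have eS : ∀ n, e (n+1) = e n * B * Q := fun _ => rfl
  have ebound : ∀ n, ‖e n‖ ≤ ‖Q‖ * (‖B‖*‖Q‖)^n := by
    intro n
    induction n with
    | zero => simp [e0]
    | succ n ih =>
      rw [eS]
      calc ‖e n * B * Q‖ ≤ ‖e n * B‖ * ‖Q‖ := hsubmul _ _
        _ ≤ (‖e n‖ * ‖B‖) * ‖Q‖ :=
          mul_le_mul_of_nonneg_right (hsubmul _ _) (norm_nonneg _)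
        _ ≤ ((‖Q‖ * (‖B‖*‖Q‖)^n) * ‖B‖) * ‖Q‖ := by
          have hb0 : (0:ℝ) ≤ ‖B‖ := norm_nonneg _
          have hq0 : (0:ℝ) ≤ ‖Q‖ := norm_nonneg _
          gcongr
        _ = ‖Q‖ * (‖B‖*‖Q‖)^(n+1) := by ring
  have ekey : ∀ n, e (n+1) * A = e n * B := fun n => by rw [eS]; exact key (e n * B)
  let P : ℕ → R := fun n => ∑ k ∈ Finset.range n, ((-1:ℝ)^k • e k)
  have hC : CauchySeq P := by
    apply cauchySeq_of_le_geometric (‖B‖*‖Q‖) ‖Q‖ hr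
    intro n
    have hP : P (n+1) = P n + (-1:ℝ)^n • e n := Finset.sum_range_succ _ n
    rw [dist_eq_norm', hP, add_sub_cancel_left, norm_smul]
    simp only [norm_pow, norm_neg, norm_one, one_pow, one_mul]
    exact ebound n
  obtain ⟨L, hL⟩ := cauchySeq_tendsto_of_complete hC
  refine ⟨L, ?_⟩
  -- right multiplication by A' is a continuous additive map
  let φ : R →+ R := AddMonoidHom.mk' (fun x => x * A') (fun a b => hrdistrib a b A')
  have φcont : Continuous φ :=
    AddMonoidHomClass.continuous_of_bound φ ‖A'‖ (fun x => (hsubmul x A').trans_eq (mul_comm _ _))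
  have h1 : Filter.Tendsto (fun n => P n * A') Filter.atTop (nhds (L * A')) :=
    (φcont.tendsto L).comp hL
  have hPn : ∀ n, P n * A' = 1 - (-1:ℝ)^n • (e n * A) := by
    intro n
    have hmap : P n * A' = ∑ k ∈ Finset.range n, (((-1:ℝ)^k • e k) * A') :=
      map_sum φ (fun k => (-1:ℝ)^k • e k) (Finset.range n)
    have hterm : ∀ k, ((-1:ℝ)^k • e k) * A'
        = (-1:ℝ)^k • (e k * A) - (-1:ℝ)^(k+1) • (e (k+1) * A) := by
      intro k
      calc ((-1:ℝ)^k • e k) * A' = (-1:ℝ)^k • (e k * A') := hsmul_left _ _ _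
        _ = (-1:ℝ)^k • (e k * A + e k * B) := by rw [hAB, hldistrib]
        _ = (-1:ℝ)^k • (e k * A + e (k+1) * A) := by rw [ekey]
        _ = (-1:ℝ)^k • (e k * A) - (-1:ℝ)^(k+1) • (e (k+1) * A) := by
          rw [pow_succ, mul_neg_one, neg_smul, sub_neg_eq_add, smul_add]
    rw [hmap, Finset.sum_congr rfl (fun k _ => hterm k),
      Finset.sum_range_sub' (fun k => (-1:ℝ)^k • (e k * A))]
    rw [pow_zero, one_smul, e0, hQ]
  have h2 : Filter.Tendsto (fun n => P n * A') Filter.atTop (nhds 1) := by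
    have hfun : (fun n => P n * A') = fun n => 1 - (-1:ℝ)^n • (e n * A) := funext hPn
    rw [hfun]
    have hz : Filter.Tendsto (fun n => (-1:ℝ)^n • (e n * A)) Filter.atTop (nhds 0) := by
      apply squeeze_zero_norm (a := fun n => (‖Q‖ * ‖A‖) * (‖B‖*‖Q‖)^n)
      · intro n
        rw [norm_smul]
        simp only [norm_pow, norm_neg, norm_one, one_pow, one_mul]
        calc ‖e n * A‖ ≤ ‖e n‖ * ‖A‖ := hsubmul _ _
          _ ≤ (‖Q‖ * (‖B‖*‖Q‖)^n) * ‖A‖ :=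
            mul_le_mul_of_nonneg_right (ebound n) (norm_nonneg _)
          _ = (‖Q‖ * ‖A‖) * (‖B‖*‖Q‖)^n := by ring
      · have := (tendsto_pow_atTop_nhds_zero_of_lt_one hrnn hr).const_mul (‖Q‖ * ‖A‖)
        simpa using this
    simpa using tendsto_const_nhds.sub hz
  exact tendsto_nhds_unique h1 h2
end
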